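/- arXiv:1907.01701 — 2 statements merged into one kernel-verified Lean document; each statement's English description precedes it below -/
import Mathlib

section
/- Let u: H → R be continuous and bounded below, and let U(p) = lim_{n→∞} Sⁿ[u](p) (the limit exists by monotonicity S[u] ≤ u). Then U is h-convex on H: U(p·h) + U(p·h⁻¹) ≥ 2U(p) for all p ∈ H and h ∈ H_0. -/
/-! For a horizontal `h`, the points `p·h` and `p·h⁻¹` lie in the horizontal plane through `p`
and their Euclidean midpoint is `p`, so the weights `(1/2, 1/2, 0)` are admissible in `S` and
`2 S[v](p) ≤ v(p·h) + v(p·h⁻¹)` for every `v` bounded below. Each iterate `Sⁿ[u]` stays bounded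
below by `inf u`, so the inequality `2 Sⁿ⁺¹[u](p) ≤ Sⁿ[u](p·h) + Sⁿ[u](p·h⁻¹)` passes to the limit. -/

noncomputable section

abbrev H3 : Type := ℝ × ℝ × ℝ

def hmul (p q : H3) : H3 :=
  (p.1 + q.1, p.2.1 + q.2.1, p.2.2 + q.2.2 + (p.1 * q.2.1 - q.1 * p.2.1) / 2)

/-- Membership in the left-invariant horizontal plane through `p`:
`y_p x − x_p y + 2z − 2z_p = 0`. -/
def onPlane (p q : H3) : Prop :=
  p.2.1 * q.1 - p.1 * q.2.1 + 2 * q.2.2 - 2 * p.2.2 = 0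

/-- The partial convexification operator `S`. -/
def Sop (u : H3 → ℝ) (p : H3) : ℝ :=
  sInf { s : ℝ | ∃ (c : Fin 3 → ℝ) (q : Fin 3 → H3),
    (∀ i, c i ∈ Set.Icc (0 : ℝ) 1) ∧ (∑ i, c i) = 1 ∧ (∀ i, onPlane p (q i)) ∧
    (∑ i, c i • q i) = p ∧ s = ∑ i, c i * u (q i) }

/-- Coercivity: `inf_{|p| ≥ R} u(p)/|p| → ∞` as `R → ∞`. -/
def Coercive (u : H3 → ℝ) : Prop :=
  ∀ C : ℝ, ∃ R : ℝ, ∀ p : H3, R ≤ ‖p‖ → C ≤ u p / ‖p‖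

/-- Horizontal convexity (midpoint inequality along horizontal directions). -/
def hConvex (u : H3 → ℝ) : Prop :=
  ∀ p h : H3, h.2.2 = 0 → 2 * u p ≤ u (hmul p h) + u (hmul p (-h.1, -h.2.1, -h.2.2))

open Finset

lemma onPlane_self (p : H3) : onPlane p p := by
  simp only [onPlane]
  ring

lemma onPlane_hmul {h : H3} (hh : h.2.2 = 0) (p : H3) : onPlane p (hmul p h) := by
  simp only [onPlane, hmul, hh]
  ring

lemma hmul_add_hmul_neg {h : H3} (hh : h.2.2 = 0) (p : H3) :
    hmul p h + hmul p (-h.1, -h.2.1, -h.2.2) = (2 : ℝ) • p := by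
  ext <;> simp only [hmul, hh, Prod.fst_add, Prod.snd_add, Prod.smul_fst, Prod.smul_snd,
    smul_eq_mul] <;> ring

def sopValues (u : H3 → ℝ) (p : H3) : Set ℝ :=
  { s : ℝ | ∃ (c : Fin 3 → ℝ) (q : Fin 3 → H3),
    (∀ i, c i ∈ Set.Icc (0 : ℝ) 1) ∧ (∑ i, c i) = 1 ∧ (∀ i, onPlane p (q i)) ∧
    (∑ i, c i • q i) = p ∧ s = ∑ i, c i * u (q i) }

lemma Sop_eq_sInf (u : H3 → ℝ) (p : H3) : Sop u p = sInf (sopValues u p) := rfl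

lemma self_mem_sopValues (u : H3 → ℝ) (p : H3) : u p ∈ sopValues u p := by
  refine ⟨![1, 0, 0], ![p, p, p], ?_, ?_, ?_, ?_, ?_⟩
  · intro i; fin_cases i <;> norm_num
  · simp [Fin.sum_univ_three]
  · intro i; fin_cases i <;> exact onPlane_self p
  · simp [Fin.sum_univ_three]
  · simp [Fin.sum_univ_three]

lemma midpoint_mem_sopValues (u : H3 → ℝ) (p : H3) {h : H3} (hh : h.2.2 = 0) :
    (u (hmul p h) + u (hmul p (-h.1, -h.2.1, -h.2.2))) / 2 ∈ sopValues u p := by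
  refine ⟨![1/2, 1/2, 0], ![hmul p h, hmul p (-h.1, -h.2.1, -h.2.2), p], ?_, ?_, ?_, ?_, ?_⟩
  · intro i; fin_cases i <;> norm_num
  · simp [Fin.sum_univ_three]; norm_num
  · intro i
    fin_cases i
    · exact onPlane_hmul hh p
    · exact onPlane_hmul (h := (-h.1, -h.2.1, -h.2.2)) (by simp [hh]) p
    · exact onPlane_self p
  · simp [Fin.sum_univ_three, ← smul_add, hmul_add_hmul_neg hh, smul_smul]
  · simp [Fin.sum_univ_three]; ring

section LowerBound

variable {u : H3 → ℝ} {m : ℝ}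

lemma le_of_mem_sopValues (hm : ∀ q, m ≤ u q) {p : H3} {s : ℝ} (hs : s ∈ sopValues u p) :
    m ≤ s := by
  obtain ⟨c, q, hc, hsum, -, -, rfl⟩ := hs
  calc m = ∑ i, c i * m := by rw [← sum_mul, hsum, one_mul]
    _ ≤ ∑ i, c i * u (q i) := sum_le_sum fun i _ => mul_le_mul_of_nonneg_left (hm _) (hc i).1

lemma le_Sop (hm : ∀ q, m ≤ u q) (p : H3) : m ≤ Sop u p := by
  rw [Sop_eq_sInf]
  exact le_csInf ⟨_, self_mem_sopValues u p⟩ fun _ => le_of_mem_sopValues hm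

lemma le_Sop_iterate (hm : ∀ q, m ≤ u q) (n : ℕ) (q : H3) : m ≤ (Sop^[n] u) q := by
  induction n generalizing q with
  | zero => exact hm q
  | succ n ih =>
    rw [Function.iterate_succ_apply']
    exact le_Sop ih q

-- `sInf` of a set that is not bounded below is `0`, whence the lower bound `m`.
lemma two_mul_Sop_le (hm : ∀ q, m ≤ u q) (p : H3) {h : H3} (hh : h.2.2 = 0) :
    2 * Sop u p ≤ u (hmul p h) + u (hmul p (-h.1, -h.2.1, -h.2.2)) := by
  have hS : Sop u p ≤ (u (hmul p h) + u (hmul p (-h.1, -h.2.1, -h.2.2))) / 2 := by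
    rw [Sop_eq_sInf]
    exact csInf_le ⟨m, fun _ => le_of_mem_sopValues hm⟩ (midpoint_mem_sopValues u p hh)
  linarith

end LowerBound

lemma hConvex_of_tendsto {f : ℕ → H3 → ℝ} {U : H3 → ℝ}
    (hf : ∀ n p h, h.2.2 = 0 →
      2 * f (n + 1) p ≤ f n (hmul p h) + f n (hmul p (-h.1, -h.2.1, -h.2.2)))
    (hU : ∀ p, Filter.Tendsto (fun n => f n p) Filter.atTop (nhds (U p))) : hConvex U :=
  fun p h hh => le_of_tendsto_of_tendsto'
    (((hU p).comp (Filter.tendsto_add_atTop_nat 1)).const_mul 2)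
    ((hU _).add (hU _)) fun n => hf n p h hh

theorem iterated_limit_hConvex_general (u : H3 → ℝ)
    (hb : BddBelow (Set.range u)) (U : H3 → ℝ)
    (hU : ∀ p : H3, Filter.Tendsto (fun n => (Sop^[n] u) p) Filter.atTop (nhds (U p))) :
    hConvex U := by
  obtain ⟨m, hm⟩ := hb
  refine hConvex_of_tendsto (fun n p h hh => ?_) hU
  rw [Function.iterate_succ_apply']
  exact two_mul_Sop_le (le_Sop_iterate (Set.forall_mem_range.1 hm) n) p hh

theorem iterated_limit_hConvex (u : H3 → ℝ) (hc : Continuous u)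
    (hb : BddBelow (Set.range u)) (U : H3 → ℝ)
    (hU : ∀ p : H3, Filter.Tendsto (fun n => (Sop^[n] u) p) Filter.atTop (nhds (U p))) :
    hConvex U :=
  iterated_limit_hConvex_general u hb U hU
end
end

section
/- Let 0 ≤ α < 1/3 and f(x,y,z) = (1−3α)(x²+y²) + x²y² + 2z² − 4α. Then u(x,y,z) = x² + y² + x²y² + 2z² satisfies u − αΔ_H u = f in R^3, where Δ_H u = X²u + Y²u with X = ∂_x − (y/2)∂_z and Y = ∂_y + (x/2)∂_z; moreover the symmetrized horizontal Hessian of f is [[2(1−3α)+3y², 3xy],[3xy, 2(1−3α)+3x²]], which is positive semidefinite at every point. -/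
noncomputable section

def pd1 (u : H3 → ℝ) (p : H3) : ℝ := fderiv ℝ u p (1, 0, 0)
def pd2 (u : H3 → ℝ) (p : H3) : ℝ := fderiv ℝ u p (0, 1, 0)
def pd3 (u : H3 → ℝ) (p : H3) : ℝ := fderiv ℝ u p (0, 0, 1)

/-- Left-invariant horizontal vector field X = ∂ₓ − (y/2)∂_z. -/
def Xop (u : H3 → ℝ) (p : H3) : ℝ := pd1 u p - p.2.1 / 2 * pd3 u p

/-- Left-invariant horizontal vector field Y = ∂_y + (x/2)∂_z. -/
def Yop (u : H3 → ℝ) (p : H3) : ℝ := pd2 u p + p.1 / 2 * pd3 u p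

/-- Symmetrized horizontal Hessian. -/
def hHess (u : H3 → ℝ) (p : H3) : Matrix (Fin 2) (Fin 2) ℝ :=
  !![Xop (Xop u) p, (Xop (Yop u) p + Yop (Xop u) p) / 2;
     (Xop (Yop u) p + Yop (Xop u) p) / 2, Yop (Yop u) p]

/-! On the family `a (x² + y²) + x²y² + 2z² + c` the horizontal fields act as
`X² = 2a + 3y²`, `Y² = 2a + 3x²` and `XY, YX = 3xy ± 2z`, so the `z`-terms cancel in the
symmetrized Hessian, which is `2a • 1 + 3 w wᵀ` with `w = (y, x)`. Both `u` (with `a = 1`) and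
`f` (with `a = 1 - 3α`) belong to the family, and `1 - 3α ≥ 0` gives positive semidefiniteness. -/

def quartic (a c : ℝ) : H3 → ℝ := fun q =>
  a * (q.1 ^ 2 + q.2.1 ^ 2) + q.1 ^ 2 * q.2.1 ^ 2 + 2 * q.2.2 ^ 2 + c

open Matrix in
lemma posSemidef_add_rankOne_fin_two {a b : ℝ} (ha : 0 ≤ a) (hb : 0 ≤ b) (x y : ℝ) :
    (!![a + b * y ^ 2, b * x * y; b * x * y, a + b * x ^ 2]).PosSemidef := by
  refine .of_dotProduct_mulVec_nonneg ?_ fun v => ?_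
  · ext i j
    fin_cases i <;> fin_cases j <;> simp [conjTranspose_apply]
  · have hform : star v ⬝ᵥ (!![a + b * y ^ 2, b * x * y; b * x * y, a + b * x ^ 2] *ᵥ v)
        = a * (v 0 ^ 2 + v 1 ^ 2) + b * (y * v 0 + x * v 1) ^ 2 := by
      simp [mulVec, dotProduct, Fin.sum_univ_two]
      ring
    rw [hform]
    positivity

lemma Xop_eq_fderiv (u : H3 → ℝ) : Xop u = fun p => fderiv ℝ u p (1, 0, -(p.2.1 / 2)) := by
  funext p
  have hdir : ((1 : ℝ), (0 : ℝ), -(p.2.1 / 2)) = (1, 0, 0) - (p.2.1 / 2) • (0, 0, 1) := by simp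
  rw [Xop, pd1, pd3, hdir, map_sub, map_smul, smul_eq_mul]

lemma Yop_eq_fderiv (u : H3 → ℝ) : Yop u = fun p => fderiv ℝ u p (0, 1, p.1 / 2) := by
  funext p
  have hdir : ((0 : ℝ), (1 : ℝ), p.1 / 2) = (0, 1, 0) + (p.1 / 2) • (0, 0, 1) := by simp
  rw [Yop, pd2, pd3, hdir, map_add, map_smul, smul_eq_mul]

section quartic

variable (a c : ℝ)

lemma Xop_quartic :
    Xop (quartic a c) = fun q => 2 * a * q.1 + 2 * q.1 * q.2.1 ^ 2 - 2 * q.2.1 * q.2.2 := by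
  funext p
  unfold quartic
  simp (disch := fun_prop) [Xop_eq_fderiv, fderiv_fun_add, fderiv_fun_mul, fderiv_fun_pow,
    fderiv.fst, fderiv.snd]
  ring

lemma Yop_quartic :
    Yop (quartic a c) = fun q => 2 * a * q.2.1 + 2 * q.1 ^ 2 * q.2.1 + 2 * q.1 * q.2.2 := by
  funext p
  unfold quartic
  simp (disch := fun_prop) [Yop_eq_fderiv, fderiv_fun_add, fderiv_fun_mul, fderiv_fun_pow,
    fderiv.fst, fderiv.snd]
  ring

lemma Xop_Xop_quartic : Xop (Xop (quartic a c)) = fun q => 2 * a + 3 * q.2.1 ^ 2 := by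
  funext p
  rw [Xop_quartic]
  simp (disch := fun_prop) [Xop_eq_fderiv, fderiv_fun_add, fderiv_fun_sub, fderiv_fun_mul,
    fderiv_fun_pow, fderiv.fst, fderiv.snd]
  ring

lemma Xop_Yop_quartic : Xop (Yop (quartic a c)) = fun q => 3 * q.1 * q.2.1 + 2 * q.2.2 := by
  funext p
  rw [Yop_quartic]
  simp (disch := fun_prop) [Xop_eq_fderiv, fderiv_fun_add, fderiv_fun_mul, fderiv_fun_pow,
    fderiv.fst, fderiv.snd]
  ring

lemma Yop_Xop_quartic : Yop (Xop (quartic a c)) = fun q => 3 * q.1 * q.2.1 - 2 * q.2.2 := by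
  funext p
  rw [Xop_quartic]
  simp (disch := fun_prop) [Yop_eq_fderiv, fderiv_fun_add, fderiv_fun_sub, fderiv_fun_mul,
    fderiv_fun_pow, fderiv.fst, fderiv.snd]
  ring

lemma Yop_Yop_quartic : Yop (Yop (quartic a c)) = fun q => 2 * a + 3 * q.1 ^ 2 := by
  funext p
  rw [Yop_quartic]
  simp (disch := fun_prop) [Yop_eq_fderiv, fderiv_fun_add, fderiv_fun_mul, fderiv_fun_pow,
    fderiv.fst, fderiv.snd]
  ring

lemma hHess_quartic (p : H3) :
    hHess (quartic a c) p
      = !![2 * a + 3 * p.2.1 ^ 2, 3 * p.1 * p.2.1; 3 * p.1 * p.2.1, 2 * a + 3 * p.1 ^ 2] := by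
  rw [hHess, Xop_Xop_quartic, Xop_Yop_quartic, Yop_Xop_quartic, Yop_Yop_quartic]
  ext i j
  fin_cases i <;> fin_cases j <;> simp

end quartic

theorem semilinear_example_general (α : ℝ) (hα1 : α < 1 / 3) :
    (∀ p : H3,
      (fun q : H3 => q.1 ^ 2 + q.2.1 ^ 2 + q.1 ^ 2 * q.2.1 ^ 2 + 2 * q.2.2 ^ 2) p
        - α * (Xop (Xop (fun q : H3 => q.1 ^ 2 + q.2.1 ^ 2 + q.1 ^ 2 * q.2.1 ^ 2
              + 2 * q.2.2 ^ 2)) p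
           + Yop (Yop (fun q : H3 => q.1 ^ 2 + q.2.1 ^ 2 + q.1 ^ 2 * q.2.1 ^ 2
              + 2 * q.2.2 ^ 2)) p)
      = (1 - 3 * α) * (p.1 ^ 2 + p.2.1 ^ 2) + p.1 ^ 2 * p.2.1 ^ 2 + 2 * p.2.2 ^ 2
          - 4 * α) ∧
    (∀ p : H3,
      hHess (fun q : H3 => (1 - 3 * α) * (q.1 ^ 2 + q.2.1 ^ 2) + q.1 ^ 2 * q.2.1 ^ 2
          + 2 * q.2.2 ^ 2 - 4 * α) p
        = !![2 * (1 - 3 * α) + 3 * p.2.1 ^ 2, 3 * p.1 * p.2.1;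
             3 * p.1 * p.2.1, 2 * (1 - 3 * α) + 3 * p.1 ^ 2]) ∧
    (∀ p : H3,
      (hHess (fun q : H3 => (1 - 3 * α) * (q.1 ^ 2 + q.2.1 ^ 2) + q.1 ^ 2 * q.2.1 ^ 2
          + 2 * q.2.2 ^ 2 - 4 * α) p).PosSemidef) := by
  have hu : (fun q : H3 => q.1 ^ 2 + q.2.1 ^ 2 + q.1 ^ 2 * q.2.1 ^ 2 + 2 * q.2.2 ^ 2)
      = quartic 1 0 := by
    funext q
    simp [quartic]
  have hf : (fun q : H3 => (1 - 3 * α) * (q.1 ^ 2 + q.2.1 ^ 2) + q.1 ^ 2 * q.2.1 ^ 2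
      + 2 * q.2.2 ^ 2 - 4 * α) = quartic (1 - 3 * α) (-(4 * α)) := by
    funext q
    simp only [quartic]
    ring
  have hHess_f : ∀ p : H3,
      hHess (fun q : H3 => (1 - 3 * α) * (q.1 ^ 2 + q.2.1 ^ 2) + q.1 ^ 2 * q.2.1 ^ 2
          + 2 * q.2.2 ^ 2 - 4 * α) p
        = !![2 * (1 - 3 * α) + 3 * p.2.1 ^ 2, 3 * p.1 * p.2.1;
             3 * p.1 * p.2.1, 2 * (1 - 3 * α) + 3 * p.1 ^ 2] := by
    intro p
    rw [hf, hHess_quartic]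
  refine ⟨fun p => ?_, hHess_f, fun p => ?_⟩
  · rw [hu, Xop_Xop_quartic, Yop_Yop_quartic]
    simp only [quartic]
    ring
  · rw [hHess_f p]
    exact posSemidef_add_rankOne_fin_two (by linarith) (by norm_num) _ _

theorem semilinear_example (α : ℝ) (hα0 : 0 ≤ α) (hα1 : α < 1 / 3) :
    (∀ p : H3,
      (fun q : H3 => q.1 ^ 2 + q.2.1 ^ 2 + q.1 ^ 2 * q.2.1 ^ 2 + 2 * q.2.2 ^ 2) p
        - α * (Xop (Xop (fun q : H3 => q.1 ^ 2 + q.2.1 ^ 2 + q.1 ^ 2 * q.2.1 ^ 2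
              + 2 * q.2.2 ^ 2)) p
           + Yop (Yop (fun q : H3 => q.1 ^ 2 + q.2.1 ^ 2 + q.1 ^ 2 * q.2.1 ^ 2
              + 2 * q.2.2 ^ 2)) p)
      = (1 - 3 * α) * (p.1 ^ 2 + p.2.1 ^ 2) + p.1 ^ 2 * p.2.1 ^ 2 + 2 * p.2.2 ^ 2
          - 4 * α) ∧
    (∀ p : H3,
      hHess (fun q : H3 => (1 - 3 * α) * (q.1 ^ 2 + q.2.1 ^ 2) + q.1 ^ 2 * q.2.1 ^ 2
          + 2 * q.2.2 ^ 2 - 4 * α) p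
        = !![2 * (1 - 3 * α) + 3 * p.2.1 ^ 2, 3 * p.1 * p.2.1;
             3 * p.1 * p.2.1, 2 * (1 - 3 * α) + 3 * p.1 ^ 2]) ∧
    (∀ p : H3,
      (hHess (fun q : H3 => (1 - 3 * α) * (q.1 ^ 2 + q.2.1 ^ 2) + q.1 ^ 2 * q.2.1 ^ 2
          + 2 * q.2.2 ^ 2 - 4 * α) p).PosSemidef) :=
  semilinear_example_general α hα1
end
end
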